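/- arXiv:1808.08507 — 4 statements merged into one kernel-verified Lean document; each statement's English description precedes it below -/
import Mathlib

section
/- Let n ≥ 2, θ > 0, and let π₁,...,π_N be i.i.d. samples from the Mallows' φ model P_{θ,id}. Let A_N be the event that some permutation π ∈ S_n with π ≠ id satisfies Σ_{i=1}^N inv(π_i ∘ π⁻¹) ≤ Σ_{i=1}^N inv(π_i). Then for every N ≥ 1, P_{θ,id}(A_N) ≤ (n − H_n) · n! · (cosh(θ/2))^{−N}, where H_n := Σ_{i=1}^n 1/i is the n-th harmonic number. In particular, the maximum likelihood estimator of the central ranking converges to the true center exponentially fast in the sample size N. -/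
open scoped BigOperators Classical

/-- Number of inversions of a permutation of `Fin n`. -/
def numInv {n : ℕ} (π : Equiv.Perm (Fin n)) : ℕ :=
  (Finset.univ.filter fun p : Fin n × Fin n => p.1 < p.2 ∧ π p.2 < π p.1).card

/-- Mallows' φ model probability mass at `π`, with dispersion `θ` and central ranking `π₀`. -/
noncomputable def mallowsP (n : ℕ) (θ : ℝ) (π₀ π : Equiv.Perm (Fin n)) : ℝ :=
  Real.exp (-θ * numInv (π * π₀⁻¹)) / ∑ σ : Equiv.Perm (Fin n), Real.exp (-θ * numInv σ)

/-- Probability of the event `A` under `N` i.i.d. samples from the Mallows' φ model. -/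
noncomputable def probOf (n N : ℕ) (θ : ℝ) (π₀ : Equiv.Perm (Fin n))
    (A : (Fin N → Equiv.Perm (Fin n)) → Prop) : ℝ :=
  ∑ x ∈ Finset.univ.filter A, ∏ i, mallowsP n θ π₀ (x i)

/-!
If for every pair `a < b` a strict majority of the samples ranks `a` before `b`, then `id` is the
unique minimiser of the total inversion count: passing from `id` to `π` trades, for each inversion
`(a, b)` of `π`, the samples reversing the pair for those keeping it, a strict loss. Hence `A_N` is
covered by the `n(n-1)/2` events "the pair `a < b` has no strict majority", and each of these has
probability at most `cosh(θ/2)^(-N)` by a Chernoff bound with exponent `θ/2` on the `±1` votes.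
The moment generating function of a single vote is bounded by pairing `σ` with `σ * swap a b`,
which has strictly more inversions when `σ` keeps the pair. Finally
`n(n-1)/2 = ∑_{i<n} (1 - 1/(i+1)) (i+1) ≤ (n - H_n) n!`.
-/

open Finset Equiv

section Inversions

variable {n : ℕ}

theorem exists_lt_apply_lt_of_ne_one {π : Perm (Fin n)} (hπ : π ≠ 1) :
    ∃ a b, a < b ∧ π b < π a := by
  by_contra! h
  have hmono : StrictMono π := (monotone_iff_forall_lt.2 h).strictMono_of_injective π.injective
  exact hπ (DFunLike.coe_injective hmono.eq_id)

theorem numInv_mul_inv_eq_card (x π : Perm (Fin n)) :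
    numInv (x * π⁻¹) = #{p : Fin n × Fin n | π p.1 < π p.2 ∧ x p.2 < x p.1} := by
  unfold numInv
  refine card_nbij' (fun p => (π⁻¹ p.1, π⁻¹ p.2)) (fun q => (π q.1, π q.2)) ?_ ?_ ?_ ?_ <;>
    intro p <;> simp only [coe_filter, mem_univ, true_and, Set.mem_ofPred_eq] <;> simp

theorem numInv_lt_numInv_mul_swap (σ : Perm (Fin n)) {a b : Fin n}
    (hab : a < b) (hσ : σ a < σ b) :
    numInv σ < numInv (σ * swap a b) := by
  set τ := swap a b
  have hτ (k : Fin n) : τ k = if k = a then b else if k = b then a else k :=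
    Equiv.swap_apply_def a b k
  unfold numInv
  -- An inversion `p` of `σ` goes to its image under `τ` when that pair is still increasing and
  -- stays put otherwise; `(a, b)` is an inversion of `σ * τ` that is never hit.
  refine (card_le_card_of_injOn
    (fun p => if τ p.1 < τ p.2 then (τ p.1, τ p.2) else p) ?_ ?_).trans_lt
    (card_erase_lt_of_mem (a := (a, b)) ?_)
  · intro p hp
    simp only [coe_filter, mem_univ, true_and, Set.mem_ofPred_eq, mem_coe,
      mem_erase, Perm.mul_apply] at hp ⊢
    split_ifs <;> simp only [hτ] at * <;> grind
  · intro p _ q _ h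
    simp only at h
    split_ifs at h <;> grind [Equiv.swap_apply_self]
  · exact mem_filter.mpr ⟨mem_univ _, hab, by simpa [τ] using hσ⟩

theorem sum_numInv_mul_inv {N : ℕ} (x : Fin N → Perm (Fin n)) (π : Perm (Fin n)) :
    ∑ i, numInv (x i * π⁻¹) =
      ∑ p : Fin n × Fin n with π p.1 < π p.2, #{i | x i p.2 < x i p.1} := by
  simp_rw [numInv_mul_inv_eq_card, ← filter_filter, card_filter]
  exact sum_comm

theorem sum_filter_apply_lt_eq_sum_filter_lt {M : Type*} [AddCommMonoid M] (π : Perm (Fin n))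
    (f : Fin n × Fin n → M) :
    ∑ p : Fin n × Fin n with π p.1 < π p.2, f p =
      ∑ p : Fin n × Fin n with p.1 < p.2, if π p.1 < π p.2 then f p else f p.swap := by
  have hswap : ∑ p : Fin n × Fin n, (if p.1 < p.2 ∧ ¬ π p.1 < π p.2 then f p.swap else 0) =
      ∑ p : Fin n × Fin n, if p.2 < p.1 ∧ ¬ π p.2 < π p.1 then f p else 0 :=
    Fintype.sum_equiv (Equiv.prodComm _ _) _ _ fun p => rfl
  rw [sum_filter, sum_filter]
  calc ∑ p, (if π p.1 < π p.2 then f p else 0)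
      = ∑ p : Fin n × Fin n, ((if p.1 < p.2 ∧ π p.1 < π p.2 then f p else 0) +
          if p.2 < p.1 ∧ ¬ π p.2 < π p.1 then f p else 0) := by
        refine sum_congr rfl fun p _ => ?_
        have := π.injective.eq_iff (a := p.1) (b := p.2)
        split_ifs <;> grind
    _ = ∑ p : Fin n × Fin n, ((if p.1 < p.2 ∧ π p.1 < π p.2 then f p else 0) +
          if p.1 < p.2 ∧ ¬ π p.1 < π p.2 then f p.swap else 0) := by
        rw [sum_add_distrib, sum_add_distrib, hswap]
    _ = _ := by
        refine sum_congr rfl fun p _ => ?_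
        split_ifs <;> grind

theorem sum_numInv_lt_sum_numInv_mul_inv {N : ℕ} (x : Fin N → Perm (Fin n)) {π : Perm (Fin n)}
    (hπ : π ≠ 1) (hx : ∀ a b, a < b → #{i | x i b < x i a} < #{i | x i a < x i b}) :
    ∑ i, numInv (x i) < ∑ i, numInv (x i * π⁻¹) := by
  have hid := sum_numInv_mul_inv x 1
  simp only [inv_one, mul_one, Perm.one_apply] at hid
  rw [hid, sum_numInv_mul_inv, sum_filter_apply_lt_eq_sum_filter_lt]
  obtain ⟨a, b, hab, hπab⟩ := exists_lt_apply_lt_of_ne_one hπ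
  refine sum_lt_sum (fun p hp => ?_) ⟨(a, b), mem_filter.2 ⟨mem_univ _, hab⟩, ?_⟩
  · split_ifs
    exacts [le_rfl, (hx p.1 p.2 (mem_filter.1 hp).2).le]
  · simpa [if_neg (lt_asymm hπab)] using hx a b hab

theorem exists_card_le_of_sum_numInv_mul_inv_le {N : ℕ} (x : Fin N → Perm (Fin n))
    {π : Perm (Fin n)} (hπ : π ≠ 1) (hle : ∑ i, numInv (x i * π⁻¹) ≤ ∑ i, numInv (x i)) :
    ∃ a b, a < b ∧ #{i | x i a < x i b} ≤ #{i | x i b < x i a} := by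
  by_contra! h
  exact (sum_numInv_lt_sum_numInv_mul_inv x hπ h).not_ge hle

end Inversions

theorem add_mul_exp_le_div_cosh {θ : ℝ} (hθ : 0 ≤ θ) {A B : ℝ} (hAB : B * Real.exp θ ≤ A) :
    A * Real.exp (-(θ / 2)) + B * Real.exp (θ / 2) ≤ (A + B) / Real.cosh (θ / 2) := by
  rw [le_div_iff₀ (Real.cosh_pos _), Real.cosh_eq]
  set u := Real.exp (θ / 2)
  set v := Real.exp (-(θ / 2))
  have huv : u * v = 1 := by rw [← Real.exp_add, add_neg_cancel, Real.exp_zero]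
  have hu : 1 ≤ u := Real.one_le_exp (by positivity)
  have hθu : Real.exp θ = u * u := by rw [← Real.exp_add, add_halves]
  rw [hθu] at hAB
  -- `(u * u - 1) * (A * (v * v) - B)`, i.e. `(exp θ - 1) * (A * exp (-θ) - B)`, is nonnegative.
  have key : A * (v * v) + B * (u * u) ≤ A + B := by
    have := mul_nonneg (mul_nonneg (by nlinarith : 0 ≤ u * u - 1) (mul_self_nonneg v))
      (sub_nonneg.2 hAB)
    linear_combination this + ((1 + u * v) * (A + B - B * u * u)) * huv
  linear_combination key / 2 + ((A + B) / 2) * huv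

theorem sum_filter_prod_le_pow_sum_mul_exp {α : Type*} [Fintype α] {N : ℕ} {w : α → ℝ}
    (hw : ∀ a, 0 ≤ w a) (z : α → ℝ) {t : ℝ} (ht : 0 ≤ t) (A : (Fin N → α) → Prop)
    (hA : ∀ x, A x → 0 ≤ ∑ i, z (x i)) :
    ∑ x ∈ univ.filter A, ∏ i, w (x i) ≤ (∑ a, w a * Real.exp (t * z a)) ^ N := by
  rw [Fintype.sum_pow]
  refine (sum_le_sum fun x hx => ?_).trans <| sum_le_sum_of_subset_of_nonneg (subset_univ _)
    fun x _ _ => prod_nonneg fun i _ => mul_nonneg (hw _) (Real.exp_nonneg _)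
  rw [prod_mul_distrib, ← Real.exp_sum, ← mul_sum]
  exact le_mul_of_one_le_right (prod_nonneg fun i _ => hw _)
    (Real.one_le_exp (mul_nonneg ht (hA x (mem_filter.1 hx).2)))

section Mallows

variable {n N : ℕ} {θ : ℝ}

theorem sum_exp_neg_mul_numInv_pos (θ : ℝ) : 0 < ∑ σ : Perm (Fin n), Real.exp (-θ * numInv σ) :=
  sum_pos (fun _ _ => Real.exp_pos _) univ_nonempty

theorem mallowsP_nonneg (θ : ℝ) (π₀ π : Perm (Fin n)) : 0 ≤ mallowsP n θ π₀ π :=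
  div_nonneg (Real.exp_nonneg _) (sum_exp_neg_mul_numInv_pos θ).le

theorem sum_mallowsP (θ : ℝ) (π₀ : Perm (Fin n)) : ∑ π, mallowsP n θ π₀ π = 1 := by
  simp_rw [mallowsP, ← sum_div]
  rw [Fintype.sum_equiv (Equiv.mulRight π₀⁻¹) (fun π => Real.exp (-θ * numInv (π * π₀⁻¹)))
    (fun σ => Real.exp (-θ * numInv σ)) fun _ => rfl]
  exact div_self (sum_exp_neg_mul_numInv_pos θ).ne'

theorem mallowsP_mul_swap_mul_exp_le (hθ : 0 ≤ θ) {σ : Perm (Fin n)} {a b : Fin n} (hab : a < b)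
    (hσ : σ a < σ b) : mallowsP n θ 1 (σ * swap a b) * Real.exp θ ≤ mallowsP n θ 1 σ := by
  have hk : (numInv σ : ℝ) + 1 ≤ numInv (σ * swap a b) := by
    exact_mod_cast numInv_lt_numInv_mul_swap σ hab hσ
  simp only [mallowsP, inv_one, mul_one]
  rw [div_mul_eq_mul_div, ← Real.exp_add]
  gcongr
  nlinarith

def invSign (a b : Fin n) (σ : Perm (Fin n)) : ℝ :=
  (if σ b < σ a then 1 else 0) - if σ a < σ b then 1 else 0

theorem sum_mallowsP_mul_exp_invSign_le (hθ : 0 ≤ θ) {a b : Fin n} (hab : a < b) :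
    ∑ σ, mallowsP n θ 1 σ * Real.exp (θ / 2 * invSign a b σ) ≤ (Real.cosh (θ / 2))⁻¹ := by
  set τ := swap a b
  set F := fun σ => mallowsP n θ 1 σ * Real.exp (θ / 2 * invSign a b σ)
  have hpair (σ : Perm (Fin n)) :
      F σ + F (σ * τ) ≤ (mallowsP n θ 1 σ + mallowsP n θ 1 (σ * τ)) / Real.cosh (θ / 2) := by
    wlog hσ : σ a < σ b generalizing σ
    · have hστ : (σ * τ) a < (σ * τ) b := by
        simpa [τ] using (lt_or_gt_of_ne (σ.injective.ne hab.ne)).resolve_left hσ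
      simpa [τ, mul_assoc, add_comm] using this (σ * τ) hστ
    simpa [F, invSign, τ, hσ, hσ.not_gt] using
      add_mul_exp_le_div_cosh hθ (mallowsP_mul_swap_mul_exp_le hθ hab hσ)
  have hF : ∑ σ, F (σ * τ) = ∑ σ, F σ := Fintype.sum_equiv (Equiv.mulRight τ) _ _ fun _ => rfl
  have hP : ∑ σ, mallowsP n θ 1 (σ * τ) = 1 :=
    (Fintype.sum_equiv (Equiv.mulRight τ) _ _ fun _ => rfl).trans (sum_mallowsP θ 1)
  calc ∑ σ, F σ = (∑ σ, (F σ + F (σ * τ))) / 2 := by rw [sum_add_distrib, hF]; ring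
    _ ≤ (∑ σ, (mallowsP n θ 1 σ + mallowsP n θ 1 (σ * τ)) / Real.cosh (θ / 2)) / 2 := by
        gcongr with σ; exact hpair σ
    _ = (Real.cosh (θ / 2))⁻¹ := by
        rw [← sum_div, sum_add_distrib, hP, sum_mallowsP]; ring

theorem probOf_le_sum_probOf {ι : Type*} (π₀ : Perm (Fin n)) (A : (Fin N → Perm (Fin n)) → Prop)
    (s : Finset ι) (C : ι → (Fin N → Perm (Fin n)) → Prop) (hA : ∀ x, A x → ∃ i ∈ s, C i x) :
    probOf n N θ π₀ A ≤ ∑ i ∈ s, probOf n N θ π₀ (C i) := by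
  have hW (x : Fin N → Perm (Fin n)) : 0 ≤ ∏ i, mallowsP n θ π₀ (x i) :=
    prod_nonneg fun i _ => mallowsP_nonneg θ π₀ _
  simp only [probOf, sum_filter]
  rw [sum_comm]
  refine sum_le_sum fun x _ => ?_
  split_ifs with hx
  · obtain ⟨i, hi, hCi⟩ := hA x hx
    calc ∏ j, mallowsP n θ π₀ (x j) = if C i x then ∏ j, mallowsP n θ π₀ (x j) else 0 :=
          (if_pos hCi).symm
      _ ≤ _ := single_le_sum (f := fun i => if C i x then ∏ j, mallowsP n θ π₀ (x j) else 0)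
          (fun i _ => ite_nonneg (hW x) le_rfl) hi
  · exact sum_nonneg fun i _ => ite_nonneg (hW x) le_rfl

theorem probOf_card_le_card_le (hθ : 0 ≤ θ) {a b : Fin n} (hab : a < b) :
    probOf n N θ 1 (fun x => #{i | x i a < x i b} ≤ #{i | x i b < x i a}) ≤
      (Real.cosh (θ / 2))⁻¹ ^ N := by
  refine (sum_filter_prod_le_pow_sum_mul_exp (mallowsP_nonneg θ 1) (invSign a b)
    (by positivity : 0 ≤ θ / 2) _ fun x hx => ?_).trans <|
    pow_le_pow_left₀ (sum_nonneg fun σ _ => mul_nonneg (mallowsP_nonneg θ 1 σ)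
      (Real.exp_nonneg _)) (sum_mallowsP_mul_exp_invSign_le hθ hab) N
  simp only [invSign, sum_sub_distrib, sum_boole]
  exact sub_nonneg.2 (by exact_mod_cast hx)

end Mallows

theorem card_filter_fst_lt_snd (n : ℕ) :
    #{p : Fin n × Fin n | p.1 < p.2} = ∑ i ∈ range n, i := by
  rw [card_filter, Fintype.sum_prod_type, sum_comm]
  simp_rw [← card_filter, filter_gt_eq_Iio, Fin.card_Iio]
  exact Fin.sum_univ_eq_sum_range (fun i => i) n

theorem sum_range_le_sub_harmonic_mul_factorial (n : ℕ) :
    (∑ i ∈ range n, (i : ℝ)) ≤ ((n : ℝ) - ∑ i ∈ range n, (1 : ℝ) / (i + 1)) * n.factorial := by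
  have hsub : (n : ℝ) - ∑ i ∈ range n, (1 : ℝ) / (i + 1) =
      ∑ i ∈ range n, (1 - 1 / ((i : ℝ) + 1)) := by
    simp [sum_sub_distrib]
  rw [hsub, sum_mul]
  refine sum_le_sum fun i hi => ?_
  have hfact : (i : ℝ) + 1 ≤ n.factorial := by
    exact_mod_cast (mem_range.1 hi).trans_le (Nat.self_le_factorial n)
  have hpos : (0 : ℝ) < i + 1 := by positivity
  calc (i : ℝ) = (1 - 1 / ((i : ℝ) + 1)) * (i + 1) := by field_simp; ring
    _ ≤ (1 - 1 / ((i : ℝ) + 1)) * n.factorial := by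
        gcongr
        rw [sub_nonneg, div_le_one hpos]
        linarith

theorem mallows_center_mle_misidentification_upper_bound_general
    (n : ℕ) (θ : ℝ) (hθ : 0 < θ) (N : ℕ) :
    probOf n N θ 1 (fun x => ∃ π : Equiv.Perm (Fin n), π ≠ 1 ∧
        ∑ i, numInv (x i * π⁻¹) ≤ ∑ i, numInv (x i)) ≤
      ((n : ℝ) - ∑ i ∈ Finset.range n, (1 : ℝ) / (i + 1)) * (n.factorial : ℝ) *
        (Real.cosh (θ / 2)) ^ (-(N : ℤ)) := by
  calc _ ≤ ∑ p : Fin n × Fin n with p.1 < p.2,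
          probOf n N θ 1 (fun x => #{i | x i p.1 < x i p.2} ≤ #{i | x i p.2 < x i p.1}) := by
        refine probOf_le_sum_probOf 1 _ _ _ fun x ⟨π, hπ, hle⟩ => ?_
        obtain ⟨a, b, hab, hx⟩ := exists_card_le_of_sum_numInv_mul_inv_le x hπ hle
        exact ⟨(a, b), mem_filter.2 ⟨mem_univ _, hab⟩, hx⟩
    _ ≤ ∑ p : Fin n × Fin n with p.1 < p.2, (Real.cosh (θ / 2))⁻¹ ^ N :=
        sum_le_sum fun p hp => probOf_card_le_card_le hθ.le (mem_filter.1 hp).2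
    _ = (∑ i ∈ range n, (i : ℝ)) * Real.cosh (θ / 2) ^ (-(N : ℤ)) := by
        rw [sum_const, card_filter_fst_lt_snd, nsmul_eq_mul, Nat.cast_sum, zpow_neg, zpow_natCast,
          inv_pow]
    _ ≤ _ := by gcongr; exact sum_range_le_sub_harmonic_mul_factorial n

/-- exponential upper bound on the probability that some permutation other
than the true center `id` achieves a total-inversions value no larger than that of `id`:
`P(A_N) ≤ (n − H_n) · n! · (cosh(θ/2))^{−N}` for every `N ≥ 1`, where `H_n` is the `n`-th
harmonic number. -/
theorem mallows_center_mle_misidentification_upper_bound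
    (n : ℕ) (hn : 2 ≤ n) (θ : ℝ) (hθ : 0 < θ) (N : ℕ) (hN : 1 ≤ N) :
    probOf n N θ 1 (fun x => ∃ π : Equiv.Perm (Fin n), π ≠ 1 ∧
        ∑ i, numInv (x i * π⁻¹) ≤ ∑ i, numInv (x i)) ≤
      ((n : ℝ) - ∑ i ∈ Finset.range n, (1 : ℝ) / (i + 1)) * (n.factorial : ℝ) *
        (Real.cosh (θ / 2)) ^ (-(N : ℤ)) :=
  mallows_center_mle_misidentification_upper_bound_general n θ hθ N
end

section
/- Let n ≥ 2, θ > 0, and let π₁,...,π_N be i.i.d. samples from the Mallows' φ model P_{θ,id}. Then for any 1 ≤ j < k ≤ n, letting (j,k) denote the transposition of j and k, P_{θ,id}( Σ_{i=1}^N inv(π_i ∘ (j,k)) ≤ Σ_{i=1}^N inv(π_i) ) ≤ (cosh(θ/2))^{−N}. -/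
open scoped BigOperators Classical

lemma signAux_eq_pow {n : ℕ} (σ : Equiv.Perm (Fin n)) :
    Equiv.Perm.signAux σ = (-1 : ℤˣ) ^ numInv σ := by
  rw [Equiv.Perm.signAux, Finset.prod_ite, Finset.prod_const, Finset.prod_const, one_pow, mul_one]
  congr 1
  rw [numInv]
  apply Finset.card_bij (fun (x : Σ _ : Fin n, Fin n) _ => (x.2, x.1))
  · intro a ha
    simp only [Finset.mem_filter, Equiv.Perm.mem_finPairsLT] at ha
    simp only [Finset.mem_filter, Finset.mem_univ, true_and]
    refine ⟨ha.1, lt_of_le_of_ne ha.2 ?_⟩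
    exact fun h => absurd (σ.injective h) (ne_of_gt ha.1)
  · intro a ha b hb hab
    simp only [Prod.mk.injEq] at hab
    exact Sigma.ext hab.2 (heq_of_eq hab.1)
  · intro p hp
    simp only [Finset.mem_filter, Finset.mem_univ, true_and] at hp
    refine ⟨⟨p.2, p.1⟩, ?_, rfl⟩
    simp only [Finset.mem_filter, Equiv.Perm.mem_finPairsLT]
    exact ⟨hp.1, le_of_lt hp.2⟩

lemma numInv_mul_swap_ne {n : ℕ} {j k : Fin n} (h : j ≠ k) (π : Equiv.Perm (Fin n)) :
    numInv (π * Equiv.swap j k) ≠ numInv π := by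
  intro heq
  have hm := Equiv.Perm.signAux_mul π (Equiv.swap j k)
  rw [Equiv.Perm.signAux_swap h, signAux_eq_pow, signAux_eq_pow, heq] at hm
  have : (-1 : ℤˣ) = 1 := (left_eq_mul.mp hm)
  exact absurd this (by decide)

lemma exp_pair (θ : ℝ) (hθ : 0 < θ) {a b : ℕ} (hab : a ≠ b) :
    Real.cosh (θ / 2) * Real.exp (-(θ / 2) * ((a : ℝ) + b)) ≤
      (Real.exp (-θ * a) + Real.exp (-θ * b)) / 2 := by
  have h1 : Real.exp (-θ * a) + Real.exp (-θ * b)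
      = 2 * (Real.exp (-(θ / 2) * ((a : ℝ) + b)) * Real.cosh (θ / 2 * ((b : ℝ) - a))) := by
    rw [Real.cosh_eq]
    rw [show (2:ℝ) * (Real.exp (-(θ / 2) * ((a : ℝ) + b)) *
        ((Real.exp (θ / 2 * ((b : ℝ) - a)) + Real.exp (-(θ / 2 * ((b : ℝ) - a)))) / 2))
      = Real.exp (-(θ / 2) * ((a : ℝ) + b)) * Real.exp (θ / 2 * ((b : ℝ) - a))
        + Real.exp (-(θ / 2) * ((a : ℝ) + b)) * Real.exp (-(θ / 2 * ((b : ℝ) - a))) by ring,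
      ← Real.exp_add, ← Real.exp_add]
    congr 2 <;> ring
  have hE : 0 < Real.exp (-(θ / 2) * ((a : ℝ) + b)) := Real.exp_pos _
  have habs : 1 ≤ |(b : ℝ) - a| := by
    have : (1 : ℤ) ≤ |(b : ℤ) - a| := Int.one_le_abs (by omega)
    calc (1:ℝ) = ((1:ℤ):ℝ) := by norm_num
    _ ≤ ((|(b : ℤ) - a| : ℤ) : ℝ) := by exact_mod_cast this
    _ = |(b : ℝ) - a| := by push_cast [abs_sub_comm]; rw [abs_sub_comm]
  have hcosh : Real.cosh (θ / 2) ≤ Real.cosh (θ / 2 * ((b : ℝ) - a)) := by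
    rw [Real.cosh_le_cosh]
    rw [abs_mul, abs_of_pos (by positivity : (0:ℝ) < θ / 2)]
    nlinarith [abs_nonneg ((b:ℝ) - a)]
  rw [h1]
  rw [mul_comm (Real.cosh (θ / 2))]
  rw [show 2 * (Real.exp (-(θ / 2) * ((a : ℝ) + b)) * Real.cosh (θ / 2 * ((b : ℝ) - a))) / 2
    = Real.exp (-(θ / 2) * ((a : ℝ) + b)) * Real.cosh (θ / 2 * ((b : ℝ) - a)) by ring]
  exact mul_le_mul_of_nonneg_left hcosh hE.le

lemma key_sum {n : ℕ} (θ : ℝ) (hθ : 0 < θ) {j k : Fin n} (hjk : j ≠ k) :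
    Real.cosh (θ / 2) * ∑ σ : Equiv.Perm (Fin n),
        Real.exp (-(θ / 2) * ((numInv σ : ℝ) + (numInv (σ * Equiv.swap j k) : ℝ)))
      ≤ ∑ σ : Equiv.Perm (Fin n), Real.exp (-θ * (numInv σ : ℝ)) := by
  have hre : ∑ σ : Equiv.Perm (Fin n), Real.exp (-θ * (numInv σ : ℝ))
      = ∑ σ : Equiv.Perm (Fin n),
          (Real.exp (-θ * (numInv σ : ℝ))
            + Real.exp (-θ * (numInv (σ * Equiv.swap j k) : ℝ))) / 2 := by
    have h2 : ∑ σ : Equiv.Perm (Fin n), Real.exp (-θ * (numInv (σ * Equiv.swap j k) : ℝ))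
        = ∑ σ : Equiv.Perm (Fin n), Real.exp (-θ * (numInv σ : ℝ)) :=
      Fintype.sum_equiv (Equiv.mulRight (Equiv.swap j k)) _ _ (fun σ => rfl)
    rw [← Finset.sum_div, Finset.sum_add_distrib, h2]
    ring
  rw [hre, Finset.mul_sum]
  exact Finset.sum_le_sum fun σ _ => exp_pair θ hθ (Ne.symm (numInv_mul_swap_ne hjk σ))


/-- for any transposition `(j,k)` with `j < k`, the probability that `(j,k)`
is at least as likely as the identity under the total-inversions criterion is at most
`(cosh(θ/2))^{−N}`. -/
theorem mallows_transposition_comparison_bound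
    (n : ℕ) (hn : 2 ≤ n) (θ : ℝ) (hθ : 0 < θ) (N : ℕ) (hN : 1 ≤ N)
    (j k : Fin n) (hjk : j < k) :
    probOf n N θ 1 (fun x =>
        ∑ i, numInv (x i * Equiv.swap j k) ≤ ∑ i, numInv (x i)) ≤
      (Real.cosh (θ / 2)) ^ (-(N : ℤ)) := by
  classical
  have hne : j ≠ k := ne_of_lt hjk
  set τ := Equiv.swap j k with hτ
  set Ψ := ∑ σ : Equiv.Perm (Fin n), Real.exp (-θ * (numInv σ : ℝ)) with hΨ
  have hΨpos : 0 < Ψ :=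
    Finset.sum_pos (fun σ _ => Real.exp_pos _) ⟨1, Finset.mem_univ 1⟩
  have hcosh : 0 < Real.cosh (θ / 2) := Real.cosh_pos _
  have hm : ∀ σ : Equiv.Perm (Fin n), mallowsP n θ 1 σ = Real.exp (-θ * (numInv σ : ℝ)) / Ψ := by
    intro σ; simp [mallowsP, hΨ]
  set g : Equiv.Perm (Fin n) → ℝ :=
    fun σ => Real.exp (-(θ / 2) * ((numInv σ : ℝ) + (numInv (σ * τ) : ℝ))) / Ψ with hg
  have hg0 : ∀ σ, 0 ≤ g σ := fun σ => div_nonneg (Real.exp_pos _).le hΨpos.le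
  have hgm : ∀ σ : Equiv.Perm (Fin n),
      g σ = mallowsP n θ 1 σ * Real.exp ((θ / 2) * ((numInv σ : ℝ) - (numInv (σ * τ) : ℝ))) := by
    intro σ
    simp only [hg, hm]
    rw [div_mul_eq_mul_div, ← Real.exp_add]
    congr 2
    ring
  -- step 1
  have step1 : probOf n N θ 1 (fun x =>
        ∑ i, numInv (x i * τ) ≤ ∑ i, numInv (x i)) ≤ ∑ x : Fin N → Equiv.Perm (Fin n), ∏ i, g (x i) := by
    rw [probOf, Finset.sum_filter]
    refine Finset.sum_le_sum fun x _ => ?_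
    by_cases hxA : ∑ i, numInv (x i * τ) ≤ ∑ i, numInv (x i)
    · rw [if_pos hxA]
      have hprod : ∏ i, g (x i) = (∏ i, mallowsP n θ 1 (x i)) *
          Real.exp (∑ i, (θ / 2) * ((numInv (x i) : ℝ) - (numInv (x i * τ) : ℝ))) := by
        rw [Real.exp_sum, ← Finset.prod_mul_distrib]
        exact Finset.prod_congr rfl fun i _ => hgm (x i)
      rw [hprod]
      refine le_mul_of_one_le_right (Finset.prod_nonneg fun i _ => ?_) (Real.one_le_exp ?_)
      · rw [hm]; exact div_nonneg (Real.exp_pos _).le hΨpos.le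
      · rw [← Finset.mul_sum]
        have hs : (0:ℝ) ≤ ∑ i, ((numInv (x i) : ℝ) - (numInv (x i * τ) : ℝ)) := by
          rw [Finset.sum_sub_distrib, ← Nat.cast_sum, ← Nat.cast_sum, sub_nonneg]
          exact_mod_cast hxA
        positivity
    · rw [if_neg hxA]
      exact Finset.prod_nonneg fun i _ => hg0 _
  -- step 2
  have step2 : ∑ x : Fin N → Equiv.Perm (Fin n), ∏ i, g (x i) = (∑ σ, g σ) ^ N :=
    (Fintype.sum_pow g N).symm
  -- step 3
  have step3 : ∑ σ, g σ ≤ (Real.cosh (θ / 2))⁻¹ := by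
    simp only [hg]
    rw [← Finset.sum_div, div_le_iff₀ hΨpos, inv_mul_eq_div, le_div_iff₀ hcosh, mul_comm]
    exact key_sum θ hθ hne
  have hgs : (0:ℝ) ≤ ∑ σ, g σ := Finset.sum_nonneg fun σ _ => hg0 σ
  calc probOf n N θ 1 (fun x => ∑ i, numInv (x i * τ) ≤ ∑ i, numInv (x i))
      ≤ (∑ σ, g σ) ^ N := step2 ▸ step1
    _ ≤ ((Real.cosh (θ / 2))⁻¹) ^ N := pow_le_pow_left₀ hgs step3 N
    _ = (Real.cosh (θ / 2)) ^ (-(N : ℤ)) := by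
        rw [zpow_neg, zpow_natCast, inv_pow]
end

section
/- Let n ≥ 2 and set f(q) := Σ_{π∈S_n} q^{inv(π)} and g(q) := q·f′(q)/f(q) for q > 0. Then the function θ ↦ g(e^{−θ}) is strictly decreasing and strictly convex on (0, ∞); consequently its inverse function, and hence the map m ↦ −log g⁻¹(m), is strictly convex and strictly decreasing on the range of g(e^{−·}). -/
/-!
Splitting a permutation of `Fin (n + 1)` into its last value and the pattern of the remaining
values gives `f q = ∏_{k=1}^n (1 + q + ⋯ + q^(k-1))`, so that `g (e^{-θ}) = ∑_k (ψ θ - k ψ (k θ))`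
with `ψ t = 1 / (e^t - 1)`. Its first two derivatives are `∑_k (k² ψ₁ (k θ) - ψ₁ θ)` and
`∑_k (ψ₂ θ - k³ ψ₂ (k θ))`, where `ψ₁ t = 1 / (4 sinh² (t/2))` and
`ψ₂ t = cosh (t/2) / (4 sinh³ (t/2))`. Every summand has a sign, strict from `k = 2` on, because
`t² / sinh² t` and `t³ cosh t / sinh³ t` are strictly decreasing on `(0, ∞)`. Finally, a left
inverse of a strictly decreasing, strictly convex continuous function is strictly decreasing and
strictly convex on its range.
-/

open scoped BigOperators

section

open Finset

namespace Equiv.Perm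

variable {n : ℕ}

/-- The pattern of `σ 0, …, σ (n - 1)`: the values of `σ` off the last position, relabelled
order-preservingly into `Fin n`. -/
def removeLast (σ : Perm (Fin (n + 1))) : Perm (Fin n) :=
  (finSuccAboveEquiv (Fin.last n)).trans
    ((σ.subtypeEquiv fun a => (σ.injective.ne_iff : σ a ≠ σ (Fin.last n) ↔ _).symm).trans
      (finSuccAboveEquiv (σ (Fin.last n))).symm)

theorem succAbove_removeLast (σ : Perm (Fin (n + 1))) (i : Fin n) :
    (σ (Fin.last n)).succAbove (removeLast σ i) = σ i.castSucc := by
  have h := (finSuccAboveEquiv (σ (Fin.last n))).apply_symm_apply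
    ⟨σ i.castSucc, σ.injective.ne (Fin.castSucc_lt_last i).ne⟩
  rw [finSuccAboveEquiv_apply] at h
  simp only [removeLast, trans_apply, subtypeEquiv_apply, finSuccAboveEquiv_apply,
    Fin.succAbove_last]
  exact congrArg Subtype.val h

theorem removeLast_lt_removeLast_iff (σ : Perm (Fin (n + 1))) (i j : Fin n) :
    removeLast σ i < removeLast σ j ↔ σ i.castSucc < σ j.castSucc := by
  rw [← succAbove_removeLast, ← succAbove_removeLast, Fin.succAbove_lt_succAbove_iff]

theorem bijective_apply_last_removeLast :
    Function.Bijective fun σ : Perm (Fin (n + 1)) => (σ (Fin.last n), removeLast σ) := by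
  refine (Fintype.bijective_iff_injective_and_card _).2 ⟨fun σ τ hστ => ?_, ?_⟩
  · obtain ⟨hlast, hrem⟩ := Prod.ext_iff.1 hστ
    ext x
    rcases Fin.eq_castSucc_or_eq_last x with ⟨i, rfl⟩ | rfl
    · simp only at hlast hrem
      rw [← succAbove_removeLast σ i, ← succAbove_removeLast τ i, hlast, hrem]
    · exact congrArg Fin.val hlast
  · simp [Fintype.card_perm, Nat.factorial_succ]

def inversions (σ : Perm (Fin n)) : Finset (Fin n × Fin n) :=
  {p | p.1 < p.2 ∧ σ p.2 < σ p.1}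

theorem mem_inversions {σ : Perm (Fin n)} {p : Fin n × Fin n} :
    p ∈ σ.inversions ↔ p.1 < p.2 ∧ σ p.2 < σ p.1 := by
  simp [inversions]

theorem numInv_eq_card_inversions (σ : Perm (Fin n)) : numInv σ = #σ.inversions :=
  rfl

theorem card_inversions_filter_snd_eq_last (σ : Perm (Fin (n + 1))) :
    #{p ∈ σ.inversions | p.2 = Fin.last n} = n - σ (Fin.last n) := by
  have hcard : n - (σ (Fin.last n) : ℕ) = #(Ioi (σ (Fin.last n))) := by
    rw [Fin.card_Ioi]; omega
  rw [hcard]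
  refine card_nbij' (fun p => σ p.1) (fun y => (σ.symm y, Fin.last n)) ?_ ?_ ?_ ?_
  · rintro ⟨i, j⟩ hp
    simp only [coe_filter, Set.mem_ofPred_eq, mem_inversions] at hp
    obtain ⟨⟨-, hinv⟩, rfl⟩ := hp
    simpa using hinv
  · intro y hy
    simp only [coe_Ioi, Set.mem_Ioi] at hy
    have hne : σ.symm y ≠ Fin.last n := by
      rintro h
      simp [← h] at hy
    simp [mem_inversions, Fin.lt_last_iff_ne_last.2 hne, hy]
  · rintro ⟨i, j⟩ hp
    simp only [coe_filter, Set.mem_ofPred_eq] at hp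
    simp [hp.2]
  · intro y _
    simp

theorem card_inversions_filter_snd_ne_last (σ : Perm (Fin (n + 1))) :
    #{p ∈ σ.inversions | p.2 ≠ Fin.last n} = #(removeLast σ).inversions := by
  symm
  refine card_bij (fun p _ => (p.1.castSucc, p.2.castSucc)) ?_ ?_ ?_
  · rintro ⟨i, j⟩ hp
    rw [mem_inversions, removeLast_lt_removeLast_iff] at hp
    simp [mem_inversions, hp.1, hp.2, (Fin.castSucc_lt_last j).ne]
  · rintro ⟨i, j⟩ - ⟨i', j'⟩ - h
    simpa using h
  · rintro ⟨i, j⟩ hp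
    simp only [mem_filter, mem_inversions] at hp
    obtain ⟨⟨hij, hinv⟩, hj⟩ := hp
    have hi : i ≠ Fin.last n := (hij.trans_le (Fin.le_last j)).ne
    refine ⟨(i.castPred hi, j.castPred hj), ?_, by simp⟩
    rw [mem_inversions, removeLast_lt_removeLast_iff, Fin.castPred_lt_castPred_iff,
      Fin.castSucc_castPred, Fin.castSucc_castPred]
    exact ⟨hij, hinv⟩

theorem numInv_eq_sub_add_numInv_removeLast (σ : Perm (Fin (n + 1))) :
    numInv σ = (n - σ (Fin.last n)) + numInv (removeLast σ) := by
  rw [numInv_eq_card_inversions, numInv_eq_card_inversions, ← card_inversions_filter_snd_eq_last,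
    ← card_inversions_filter_snd_ne_last, card_filter_add_card_filter_not]

end Equiv.Perm

theorem sum_pow_numInv {R : Type*} [CommSemiring R] (n : ℕ) (q : R) :
    ∑ σ : Equiv.Perm (Fin n), q ^ numInv σ = ∏ j ∈ range n, ∑ i ∈ range (j + 1), q ^ i := by
  induction n with
  | zero => simp [numInv]
  | succ n ih =>
    have hlast : ∑ p : Fin (n + 1), q ^ (n - (p : ℕ)) = ∑ i ∈ range (n + 1), q ^ i := by
      rw [Fin.sum_univ_eq_sum_range (fun i => q ^ (n - i)), ← sum_range_reflect]
      refine sum_congr rfl fun i hi => ?_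
      rw [mem_range] at hi
      congr 1
      omega
    rw [Fintype.sum_bijective _ Equiv.Perm.bijective_apply_last_removeLast _
      (fun pe => q ^ (n - (pe.1 : ℕ)) * q ^ numInv pe.2)
      fun σ => by rw [Equiv.Perm.numInv_eq_sub_add_numInv_removeLast, pow_add]]
    simp only [Fintype.sum_prod_type]
    rw [← Fintype.sum_mul_sum, hlast, ih, prod_range_succ, mul_comm]

end

section

open Finset Set Real

theorem strictAntiOn_of_hasDerivAt_neg {s : Set ℝ} (hs : Convex ℝ s)
    {f f' : ℝ → ℝ} (hf : ∀ x ∈ s, HasDerivAt f (f' x) x) (hf' : ∀ x ∈ s, f' x < 0) :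
    StrictAntiOn f s :=
  strictAntiOn_of_hasDerivWithinAt_neg hs
    (fun x hx => (hf x hx).continuousAt.continuousWithinAt)
    (fun x hx => (hf x (interior_subset hx)).hasDerivWithinAt)
    (fun x hx => hf' x (interior_subset hx))

theorem strictConvexOn_of_hasDerivAt2_pos {s : Set ℝ} (hs : Convex ℝ s)
    {f f' f'' : ℝ → ℝ} (hf : ∀ x ∈ s, HasDerivAt f (f' x) x)
    (hf' : ∀ x ∈ s, HasDerivAt f' (f'' x) x) (hf'' : ∀ x ∈ s, 0 < f'' x) :
    StrictConvexOn ℝ s f := by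
  have hmono : StrictMonoOn f' s :=
    strictMonoOn_of_hasDerivWithinAt_pos hs
      (fun x hx => (hf' x hx).continuousAt.continuousWithinAt)
      (fun x hx => (hf' x (interior_subset hx)).hasDerivWithinAt)
      (fun x hx => hf'' x (interior_subset hx))
  refine StrictMonoOn.strictConvexOn_of_deriv hs
    (fun x hx => (hf x hx).continuousAt.continuousWithinAt) ?_
  exact (hmono.mono interior_subset).congr fun x hx => ((hf x (interior_subset hx)).deriv).symm

theorem pos_of_hasDerivAt_pos {G G' : ℝ → ℝ} {a : ℝ} (hG : ∀ x, HasDerivAt G (G' x) x)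
    (ha : G a = 0) (hG' : ∀ x, a < x → 0 < G' x) {x : ℝ} (hx : a < x) : 0 < G x := by
  have hmono : StrictMonoOn G (Ici a) :=
    strictMonoOn_of_hasDerivWithinAt_pos (convex_Ici a)
      (fun x _ => (hG x).continuousAt.continuousWithinAt)
      (fun x _ => (hG x).hasDerivWithinAt)
      (fun x hx => hG' x (by simpa using hx))
  simpa [ha] using hmono self_mem_Ici hx.le hx

theorem sinh_lt_mul_cosh {x : ℝ} (hx : 0 < x) : sinh x < x * cosh x := by
  have hpos := pos_of_hasDerivAt_pos (G := fun x => x * cosh x - sinh x)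
    (G' := fun x => x * sinh x)
    (fun x => (((hasDerivAt_id x).mul (hasDerivAt_cosh x)).sub (hasDerivAt_sinh x)).congr_deriv
      (by simp))
    (by simp) (fun x hx => mul_pos hx (sinh_pos_iff.2 hx)) hx
  simpa using hpos

theorem three_mul_sinh_mul_cosh_add_lt {x : ℝ} (hx : 0 < x) :
    3 * sinh x * cosh x + x * sinh x ^ 2 < 3 * x * cosh x ^ 2 := by
  have hpos := pos_of_hasDerivAt_pos
    (G := fun x => 3 * x * cosh x ^ 2 - 3 * sinh x * cosh x - x * sinh x ^ 2)
    (G' := fun x => 4 * sinh x * (x * cosh x - sinh x))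
    (fun x => by
      have h := ((((hasDerivAt_id x).const_mul 3).fun_mul ((hasDerivAt_cosh x).fun_pow 2)).fun_sub
        (((hasDerivAt_sinh x).const_mul 3).fun_mul (hasDerivAt_cosh x))).fun_sub
        ((hasDerivAt_id x).fun_mul ((hasDerivAt_sinh x).fun_pow 2))
      refine h.congr_deriv ?_
      simp only [id, Nat.cast_ofNat]
      ring)
    (by simp)
    (fun x hx => mul_pos (mul_pos four_pos (sinh_pos_iff.2 hx)) (sub_pos.2 (sinh_lt_mul_cosh hx)))
    hx
  linarith

theorem strictAntiOn_sq_mul_inv_sinh_sq :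
    StrictAntiOn (fun t => t ^ 2 * (sinh t ^ 2)⁻¹) (Ioi 0) := by
  refine strictAntiOn_of_hasDerivAt_neg (convex_Ioi 0)
    (f' := fun t => -(2 * t * (t * cosh t - sinh t) / sinh t ^ 3)) (fun t ht => ?_) (fun t ht => ?_)
  · have hs : sinh t ≠ 0 := (sinh_pos_iff.2 ht).ne'
    refine ((hasDerivAt_pow 2 t).fun_mul
      (((hasDerivAt_sinh t).fun_pow 2).fun_inv (pow_ne_zero 2 hs))).congr_deriv ?_
    field_simp
    ring
  · have hs := sinh_pos_iff.2 (mem_Ioi.1 ht)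
    have hD := sub_pos.2 (sinh_lt_mul_cosh (mem_Ioi.1 ht))
    exact neg_neg_of_pos (div_pos (mul_pos (mul_pos two_pos ht) hD) (pow_pos hs 3))

theorem strictAntiOn_cube_mul_cosh_div_sinh_cube :
    StrictAntiOn (fun t => t ^ 3 * (cosh t / sinh t ^ 3)) (Ioi 0) := by
  refine strictAntiOn_of_hasDerivAt_neg (convex_Ioi 0)
    (f' := fun t => -(t ^ 2 * (3 * t * cosh t ^ 2 - 3 * sinh t * cosh t - t * sinh t ^ 2)
      / sinh t ^ 4)) (fun t ht => ?_) (fun t ht => ?_)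
  · have hs : sinh t ≠ 0 := (sinh_pos_iff.2 ht).ne'
    refine ((hasDerivAt_pow 3 t).fun_mul
      ((hasDerivAt_cosh t).fun_div ((hasDerivAt_sinh t).fun_pow 3)
        (pow_ne_zero 3 hs))).congr_deriv ?_
    field_simp
    ring
  · have hs := sinh_pos_iff.2 (mem_Ioi.1 ht)
    have hN : 0 < 3 * t * cosh t ^ 2 - 3 * sinh t * cosh t - t * sinh t ^ 2 := by
      linarith [three_mul_sinh_mul_cosh_add_lt (mem_Ioi.1 ht)]
    exact neg_neg_of_pos (div_pos (mul_pos (pow_pos ht 2) hN) (pow_pos hs 4))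

theorem pow_mul_lt_of_strictAntiOn {G : ℝ → ℝ} {m : ℕ}
    (hG : StrictAntiOn (fun t => t ^ m * G t) (Ioi 0)) {c x : ℝ} (hc : 1 < c) (hx : 0 < x) :
    c ^ m * G (c * x) < G x := by
  have hcx : x < c * x := by nlinarith
  have h := hG (mem_Ioi.2 hx) (mem_Ioi.2 (hx.trans hcx)) hcx
  simp only [mul_pow, mul_assoc] at h
  rw [mul_left_comm] at h
  exact lt_of_mul_lt_mul_left h (pow_nonneg hx.le m)

noncomputable def psi (t : ℝ) : ℝ := (exp t - 1)⁻¹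

noncomputable def psi₁ (t : ℝ) : ℝ := (sinh (t / 2) ^ 2)⁻¹ / 4

noncomputable def psi₂ (t : ℝ) : ℝ := cosh (t / 2) / sinh (t / 2) ^ 3 / 4

theorem exp_half_sq (t : ℝ) : exp (t / 2) ^ 2 = exp t := by
  rw [sq, ← exp_add, add_halves]

theorem exp_sub_one_eq_two_mul_exp_half_mul_sinh_half (t : ℝ) :
    exp t - 1 = 2 * exp (t / 2) * sinh (t / 2) := by
  have h : exp (t / 2) * exp (-(t / 2)) = 1 := by rw [← exp_add]; simp
  rw [sinh_eq, ← exp_half_sq t]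
  linear_combination h

theorem hasDerivAt_psi {t : ℝ} (ht : t ≠ 0) : HasDerivAt psi (-psi₁ t) t := by
  have hs : sinh (t / 2) ≠ 0 := sinh_ne_zero.2 (div_ne_zero ht two_ne_zero)
  have he : exp t - 1 ≠ 0 := sub_ne_zero.2 (fun h => ht (exp_eq_one_iff _ |>.1 h))
  refine (((hasDerivAt_exp t).sub_const 1).inv he).congr_deriv ?_
  rw [psi₁, exp_sub_one_eq_two_mul_exp_half_mul_sinh_half, ← exp_half_sq t]
  field_simp
  ring

theorem hasDerivAt_psi₁ {t : ℝ} (ht : t ≠ 0) : HasDerivAt psi₁ (-psi₂ t) t := by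
  have hs : sinh (t / 2) ≠ 0 := sinh_ne_zero.2 (div_ne_zero ht two_ne_zero)
  have hhalf : HasDerivAt (fun t => sinh (t / 2)) (cosh (t / 2) * (1 / 2)) t :=
    ((hasDerivAt_id' t).div_const 2).sinh
  refine (((hhalf.fun_pow 2).fun_inv (pow_ne_zero 2 hs)).div_const 4).congr_deriv ?_
  rw [psi₂]
  field_simp
  ring

theorem sq_mul_psi₁_lt {c θ : ℝ} (hc : 1 < c) (hθ : 0 < θ) : c ^ 2 * psi₁ (c * θ) < psi₁ θ := by
  have h := pow_mul_lt_of_strictAntiOn strictAntiOn_sq_mul_inv_sinh_sq hc (half_pos hθ)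
  rw [psi₁, psi₁, mul_div_assoc]
  linarith

theorem cube_mul_psi₂_lt {c θ : ℝ} (hc : 1 < c) (hθ : 0 < θ) : c ^ 3 * psi₂ (c * θ) < psi₂ θ := by
  have h := pow_mul_lt_of_strictAntiOn strictAntiOn_cube_mul_cosh_div_sinh_cube hc (half_pos hθ)
  rw [psi₂, psi₂, mul_div_assoc]
  linarith

/-- For `c ∈ {1, 2, …}`, the mean of the law on `{0, …, c - 1}` with weights `e^{-iθ}`. -/
noncomputable def truncGeomMean (c θ : ℝ) : ℝ := psi θ - c * psi (c * θ)

theorem hasDerivAt_truncGeomMean {c θ : ℝ} (hc : c ≠ 0) (hθ : θ ≠ 0) :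
    HasDerivAt (truncGeomMean c) (c ^ 2 * psi₁ (c * θ) - psi₁ θ) θ :=
  ((hasDerivAt_psi hθ).sub (((hasDerivAt_psi (mul_ne_zero hc hθ)).comp θ
    (hasDerivAt_const_mul c)).const_mul c)).congr_deriv (by ring)

theorem hasDerivAt_sq_mul_psi₁_sub {c θ : ℝ} (hc : c ≠ 0) (hθ : θ ≠ 0) :
    HasDerivAt (fun θ => c ^ 2 * psi₁ (c * θ) - psi₁ θ) (psi₂ θ - c ^ 3 * psi₂ (c * θ)) θ :=
  ((((hasDerivAt_psi₁ (mul_ne_zero hc hθ)).comp θ (hasDerivAt_const_mul c)).const_mul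
    (c ^ 2)).sub (hasDerivAt_psi₁ hθ)).congr_deriv (by ring)

noncomputable def meanInversions (n : ℕ) (θ : ℝ) : ℝ :=
  ∑ k ∈ range n, truncGeomMean (k + 1 : ℕ) θ

theorem hasDerivAt_meanInversions (n : ℕ) {θ : ℝ} (hθ : θ ≠ 0) :
    HasDerivAt (meanInversions n)
      (∑ k ∈ range n, (((k + 1 : ℕ) : ℝ) ^ 2 * psi₁ ((k + 1 : ℕ) * θ) - psi₁ θ)) θ :=
  HasDerivAt.fun_sum fun k _ => hasDerivAt_truncGeomMean (Nat.cast_ne_zero.2 k.succ_ne_zero) hθ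

theorem hasDerivAt_sum_sq_mul_psi₁_sub (n : ℕ) {θ : ℝ} (hθ : θ ≠ 0) :
    HasDerivAt (fun θ => ∑ k ∈ range n, (((k + 1 : ℕ) : ℝ) ^ 2 * psi₁ ((k + 1 : ℕ) * θ) - psi₁ θ))
      (∑ k ∈ range n, (psi₂ θ - ((k + 1 : ℕ) : ℝ) ^ 3 * psi₂ ((k + 1 : ℕ) * θ))) θ :=
  HasDerivAt.fun_sum fun k _ => hasDerivAt_sq_mul_psi₁_sub (Nat.cast_ne_zero.2 k.succ_ne_zero) hθ

theorem sum_range_pos_of_pos {f : ℕ → ℝ} {n : ℕ} (hn : 2 ≤ n) (h0 : f 0 = 0)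
    (hf : ∀ k, 0 < k → 0 < f k) : 0 < ∑ k ∈ range n, f k := by
  obtain ⟨m, rfl⟩ := Nat.exists_eq_add_of_le' hn
  rw [sum_range_succ', h0, add_zero]
  exact sum_pos (fun k _ => hf _ k.succ_pos) nonempty_range_add_one

theorem strictAntiOn_meanInversions {n : ℕ} (hn : 2 ≤ n) :
    StrictAntiOn (meanInversions n) (Ioi 0) := by
  refine strictAntiOn_of_hasDerivAt_neg (convex_Ioi 0)
    (fun θ hθ => hasDerivAt_meanInversions n (ne_of_gt hθ)) fun θ hθ => ?_
  have h := sum_range_pos_of_pos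
    (f := fun k => -(((k + 1 : ℕ) : ℝ) ^ 2 * psi₁ ((k + 1 : ℕ) * θ) - psi₁ θ)) hn (by simp)
    fun k hk => neg_pos.2 (sub_neg.2 (sq_mul_psi₁_lt (Nat.one_lt_cast.2 (by omega)) hθ))
  rw [sum_neg_distrib] at h
  linarith

theorem strictConvexOn_meanInversions {n : ℕ} (hn : 2 ≤ n) :
    StrictConvexOn ℝ (Ioi 0) (meanInversions n) :=
  strictConvexOn_of_hasDerivAt2_pos (convex_Ioi 0)
    (fun θ hθ => hasDerivAt_meanInversions n (ne_of_gt hθ))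
    (fun θ hθ => hasDerivAt_sum_sq_mul_psi₁_sub n (ne_of_gt hθ)) fun θ hθ =>
    sum_range_pos_of_pos hn (by simp) fun k hk =>
      sub_pos.2 (cube_mul_psi₂_lt (Nat.one_lt_cast.2 (by omega)) hθ)

theorem mul_logDeriv_geom_sum {k : ℕ} (hk : k ≠ 0) {q : ℝ} (hq : 0 < q) (hq1 : q ≠ 1) :
    q * logDeriv (fun x => ∑ i ∈ range k, x ^ i) q = k * q ^ k / (q ^ k - 1) - q / (q - 1) := by
  have hS : ∑ i ∈ range k, q ^ i ≠ 0 :=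
    (sum_pos (fun i _ => pow_pos hq i) (nonempty_range_iff.2 hk)).ne'
  have hq1' : q - 1 ≠ 0 := sub_ne_zero.2 hq1
  have hqk : q ^ k - 1 ≠ 0 := sub_ne_zero.2 fun h => hq1 ((pow_eq_one_iff_of_nonneg hq.le hk).1 h)
  have hmul := logDeriv_mul (f := fun x => ∑ i ∈ range k, x ^ i) (g := fun x => x - 1) q hS hq1'
    (by fun_prop) (by fun_prop)
  have hpow : logDeriv (fun x => x ^ k - 1) q = k * q ^ (k - 1) / (q ^ k - 1) := by
    rw [logDeriv_apply, ((hasDerivAt_pow k q).sub_const 1).deriv]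
  have hlin : logDeriv (fun x => x - 1) q = 1 / (q - 1) := by
    rw [logDeriv_apply, ((hasDerivAt_id' q).sub_const 1).deriv]
  simp only [geom_sum_mul, hpow, hlin] at hmul
  rw [eq_sub_of_add_eq hmul.symm]
  obtain ⟨m, rfl⟩ := Nat.exists_eq_succ_of_ne_zero hk
  field_simp
  rw [Nat.succ_sub_one, pow_succ]
  ring

theorem exp_neg_div_exp_neg_sub_one (t : ℝ) : exp (-t) / (exp (-t) - 1) = -psi t := by
  rw [psi, exp_neg]
  field_simp
  rw [← neg_sub (exp t) 1, one_div_neg_eq_neg_one_div]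

theorem exp_neg_mul_logDeriv_geom_sum {k : ℕ} (hk : k ≠ 0) {θ : ℝ} (hθ : θ ≠ 0) :
    exp (-θ) * logDeriv (fun x => ∑ i ∈ range k, x ^ i) (exp (-θ)) = truncGeomMean k θ := by
  rw [mul_logDeriv_geom_sum hk (exp_pos _) (fun h => hθ (by simpa using h)), ← exp_nat_mul,
    show (k : ℝ) * -θ = -(k * θ) by ring, mul_div_assoc, exp_neg_div_exp_neg_sub_one,
    exp_neg_div_exp_neg_sub_one, truncGeomMean]
  ring

theorem exp_neg_mul_logDeriv_prod_geom_sum (n : ℕ) {θ : ℝ} (hθ : θ ≠ 0) :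
    exp (-θ) * logDeriv (fun x => ∏ k ∈ range n, ∑ i ∈ range (k + 1), x ^ i) (exp (-θ)) =
      meanInversions n θ := by
  rw [logDeriv_prod (f := fun k x => ∑ i ∈ range (k + 1), x ^ i)
      (fun k _ => (sum_pos (fun i _ => pow_pos (exp_pos _) i) nonempty_range_add_one).ne')
      (fun k _ => by fun_prop), mul_sum]
  exact sum_congr rfl fun k _ => exp_neg_mul_logDeriv_geom_sum k.succ_ne_zero hθ

theorem StrictAntiOn.strictAntiOn_image_of_leftInvOn {α β : Type*} [LinearOrder α]
    [LinearOrder β] {f : α → β} {g : β → α} {s : Set α} (hf : StrictAntiOn f s)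
    (hg : LeftInvOn g f s) : StrictAntiOn g (f '' s) := by
  rintro _ ⟨x, hx, rfl⟩ _ ⟨y, hy, rfl⟩ hxy
  rw [hg hx, hg hy]
  exact (hf.lt_iff_gt hx hy).1 hxy

theorem StrictConvexOn.strictConvexOn_image_of_leftInvOn {f g : ℝ → ℝ} {s : Set ℝ}
    (hconv : StrictConvexOn ℝ s f) (hanti : StrictAntiOn f s) (hcont : ContinuousOn f s)
    (hg : LeftInvOn g f s) : StrictConvexOn ℝ (f '' s) g := by
  have himage : Convex ℝ (f '' s) := (hconv.1.isPreconnected.image f hcont).convex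
  refine ⟨himage, ?_⟩
  rintro _ ⟨x, hx, rfl⟩ _ ⟨y, hy, rfl⟩ hxy a b ha hb hab
  have hmem : a • x + b • y ∈ s := hconv.1 hx hy ha.le hb.le hab
  have hlt := hconv.2 hx hy (fun h => hxy (h ▸ rfl)) ha hb hab
  have h := hanti.strictAntiOn_image_of_leftInvOn hg (mem_image_of_mem f hmem)
    (himage (mem_image_of_mem f hx) (mem_image_of_mem f hy) ha.le hb.le hab) hlt
  rw [hg hx, hg hy]
  rwa [hg hmem] at h

end

/-- the map `θ ↦ g(e^{−θ})` (the expected number of inversions under the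
Mallows' φ model) is strictly decreasing and strictly convex on `(0, ∞)`; consequently its
inverse function — which is the map `m ↦ −log g⁻¹(m)` — is strictly decreasing and
strictly convex on the range. -/
theorem mallows_mean_inversions_strictly_convex_decreasing
    (n : ℕ) (hn : 2 ≤ n)
    (f g h : ℝ → ℝ)
    (hf : ∀ q : ℝ, f q = ∑ π : Equiv.Perm (Fin n), q ^ numInv π)
    (hg : ∀ q : ℝ, g q = q * deriv f q / f q)
    (hh : ∀ θ : ℝ, h θ = g (Real.exp (-θ))) :
    StrictAntiOn h (Set.Ioi (0 : ℝ)) ∧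
      StrictConvexOn ℝ (Set.Ioi (0 : ℝ)) h ∧
      ∀ hInv : ℝ → ℝ, (∀ θ ∈ Set.Ioi (0 : ℝ), hInv (h θ) = θ) →
        StrictAntiOn hInv (h '' Set.Ioi (0 : ℝ)) ∧
          StrictConvexOn ℝ (h '' Set.Ioi (0 : ℝ)) hInv := by
  have hf' : f = fun q => ∏ k ∈ Finset.range n, ∑ i ∈ Finset.range (k + 1), q ^ i :=
    funext fun q => (hf q).trans (sum_pow_numInv n q)
  have hmean : Set.EqOn h (meanInversions n) (Set.Ioi 0) := fun θ hθ => by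
    rw [hh, hg, ← exp_neg_mul_logDeriv_prod_geom_sum n (ne_of_gt hθ), hf', logDeriv_apply,
      mul_div_assoc]
  have hanti := (strictAntiOn_meanInversions hn).congr hmean.symm
  have hconv := (strictConvexOn_meanInversions hn).congr hmean.symm
  have hcont : ContinuousOn h (Set.Ioi 0) := ContinuousOn.congr
    (fun θ hθ => (hasDerivAt_meanInversions n (ne_of_gt hθ)).continuousAt.continuousWithinAt) hmean
  exact ⟨hanti, hconv, fun hInv hInv_h => ⟨hanti.strictAntiOn_image_of_leftInvOn hInv_h,
    hconv.strictConvexOn_image_of_leftInvOn hanti hcont hInv_h⟩⟩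
end

section
/- Let θ > 0, ℓ ≥ 1, and let (p_m) for odd m with 1 ≤ m ≤ 2ℓ−1 be nonnegative reals satisfying Σ_{m odd, 1 ≤ m ≤ 2ℓ−1} p_m (1 + e^{θm}) = 1. Then Σ_{m odd, 1 ≤ m ≤ 2ℓ−1} p_m e^{θm/2} ≤ (1/2) · (cosh(θ/2))^{−1}. Consequently, if Z is a random variable taking value +m with probability p_m and −m with probability e^{θm} p_m for each such odd m, then its moment generating function satisfies F(θ/2) = E[e^{(θ/2)Z}] ≤ (cosh(θ/2))^{−1}. -/
open scoped BigOperators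

lemma swap_key (θ : ℝ) (hθ : 0 < θ) (m : ℕ) (hm : Odd m) :
    Real.exp (θ * m / 2) ≤ (1 + Real.exp (θ * m)) * ((1/2) * (Real.cosh (θ/2))⁻¹) := by
  have hm1 : (1:ℝ) ≤ m := by exact_mod_cast hm.pos
  have hc : Real.cosh (θ/2) ≤ Real.cosh (θ * m / 2) := by
    rw [Real.cosh_le_cosh, abs_of_pos (by positivity), abs_of_pos (by positivity)]
    nlinarith
  have h1 : Real.exp (θ*m/2) * Real.exp (θ*m/2) = Real.exp (θ*m) := by
    rw [← Real.exp_add]; ring_nf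
  have h2 : Real.exp (θ*m/2) * Real.exp (-(θ*m/2)) = 1 := by
    rw [← Real.exp_add]; simp
  have hid : 1 + Real.exp (θ * m) = 2 * Real.exp (θ * m / 2) * Real.cosh (θ * m / 2) := by
    rw [Real.cosh_eq]; nlinarith
  have hcp : 0 < Real.cosh (θ/2) := Real.cosh_pos _
  rw [hid]
  have heq : 2 * Real.exp (θ*m/2) * Real.cosh (θ*m/2) * ((1/2) * (Real.cosh (θ/2))⁻¹)
      = Real.exp (θ*m/2) * (Real.cosh (θ*m/2) / Real.cosh (θ/2)) := by
    field_simp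
  rw [heq]
  calc Real.exp (θ*m/2) = Real.exp (θ*m/2) * (Real.cosh (θ/2) / Real.cosh (θ/2)) := by
        rw [div_self hcp.ne']; ring
    _ ≤ _ := by gcongr

/-- if nonnegative reals `(p_m)`, indexed by odd `m` with `1 ≤ m ≤ 2ℓ−1`,
satisfy `Σ p_m (1 + e^{θm}) = 1`, then `Σ p_m e^{θm/2} ≤ (1/2)(cosh(θ/2))⁻¹`; consequently
the moment generating function at `θ/2` of the random variable taking value `+m` with
probability `p_m` and `−m` with probability `e^{θm} p_m` satisfies
`F(θ/2) = Σ (p_m e^{θm/2} + e^{θm} p_m e^{−θm/2}) ≤ (cosh(θ/2))⁻¹`. -/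
theorem mgf_bound_for_swap_difference
    (θ : ℝ) (hθ : 0 < θ) (ℓ : ℕ) (hℓ : 1 ≤ ℓ) (p : ℕ → ℝ)
    (hp : ∀ m, 0 ≤ p m)
    (hsum : ∑ m ∈ (Finset.range (2 * ℓ)).filter (fun m => Odd m),
      p m * (1 + Real.exp (θ * m)) = 1) :
    (∑ m ∈ (Finset.range (2 * ℓ)).filter (fun m => Odd m),
        p m * Real.exp (θ * m / 2) ≤ (1 / 2) * (Real.cosh (θ / 2))⁻¹) ∧
      ∑ m ∈ (Finset.range (2 * ℓ)).filter (fun m => Odd m),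
          (p m * Real.exp ((θ / 2) * m) + Real.exp (θ * m) * p m * Real.exp (-(θ / 2) * m)) ≤
        (Real.cosh (θ / 2))⁻¹ := by
  have hfirst : ∑ m ∈ (Finset.range (2 * ℓ)).filter (fun m => Odd m),
      p m * Real.exp (θ * m / 2) ≤ (1 / 2) * (Real.cosh (θ / 2))⁻¹ := by
    calc ∑ m ∈ (Finset.range (2 * ℓ)).filter (fun m => Odd m), p m * Real.exp (θ * m / 2)
        ≤ ∑ m ∈ (Finset.range (2 * ℓ)).filter (fun m => Odd m),
            p m * (1 + Real.exp (θ * m)) * ((1/2) * (Real.cosh (θ/2))⁻¹) := by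
          apply Finset.sum_le_sum
          intro m hmem
          have hm : Odd m := (Finset.mem_filter.mp hmem).2
          have := swap_key θ hθ m hm
          have hpm := hp m
          calc p m * Real.exp (θ * m / 2)
              ≤ p m * ((1 + Real.exp (θ * m)) * ((1/2) * (Real.cosh (θ/2))⁻¹)) := by
                exact mul_le_mul_of_nonneg_left this hpm
            _ = p m * (1 + Real.exp (θ * m)) * ((1/2) * (Real.cosh (θ/2))⁻¹) := by ring
      _ = (1 / 2) * (Real.cosh (θ / 2))⁻¹ := by
          rw [← Finset.sum_mul, hsum, one_mul]
  refine ⟨hfirst, ?_⟩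
  have hterm : ∀ m : ℕ,
      p m * Real.exp ((θ / 2) * m) + Real.exp (θ * m) * p m * Real.exp (-(θ / 2) * m)
        = 2 * (p m * Real.exp (θ * m / 2)) := by
    intro m
    have e1 : Real.exp ((θ / 2) * m) = Real.exp (θ * m / 2) := by ring_nf
    have e2 : Real.exp (θ * m) * Real.exp (-(θ / 2) * m) = Real.exp (θ * m / 2) := by
      rw [← Real.exp_add]; ring_nf
    calc p m * Real.exp ((θ / 2) * m) + Real.exp (θ * m) * p m * Real.exp (-(θ / 2) * m)
        = p m * Real.exp ((θ / 2) * m)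
          + p m * (Real.exp (θ * m) * Real.exp (-(θ / 2) * m)) := by ring
      _ = 2 * (p m * Real.exp (θ * m / 2)) := by rw [e1, e2]; ring
  calc ∑ m ∈ (Finset.range (2 * ℓ)).filter (fun m => Odd m),
          (p m * Real.exp ((θ / 2) * m) + Real.exp (θ * m) * p m * Real.exp (-(θ / 2) * m))
      = 2 * ∑ m ∈ (Finset.range (2 * ℓ)).filter (fun m => Odd m),
          p m * Real.exp (θ * m / 2) := by
        rw [Finset.mul_sum]; exact Finset.sum_congr rfl fun m _ => hterm m
    _ ≤ 2 * ((1 / 2) * (Real.cosh (θ / 2))⁻¹) := by linarith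
    _ = (Real.cosh (θ / 2))⁻¹ := by ring
end
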